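/- arXiv:1010.1220 — 2 statements merged into one kernel-verified Lean document; each statement's English description precedes it below -/
import Mathlib

section
/- Let G be an undirected graph on vertex set {1,…,n} with positive vertex weights c_i and edge parameters J_ij. If J_ij ≥ min{c_i, c_j} for every edge ij of G, then the maximum of Y(x) = Σ_{i∈V(G)} c_i x_i − Σ_{ij∈E(G)} J_ij x_i x_j over all x ∈ {0,1}^n equals the maximum total weight Σ_{i∈S} c_i over all independent sets S of G. -/
open Finset

/-- The set of (ordered, increasing) edge pairs of `G`. -/
def edgePairs {n : ℕ} (G : SimpleGraph (Fin n)) [DecidableRel G.Adj] :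
    Finset (Fin n × Fin n) :=
  Finset.univ.filter (fun p => p.1 < p.2 ∧ G.Adj p.1 p.2)

/-- The pseudo-boolean function `Y(x) = Σ_i c_i x_i − Σ_{ij∈E} J_ij x_i x_j`. -/
def Y {n : ℕ} (G : SimpleGraph (Fin n)) [DecidableRel G.Adj]
    (c : Fin n → ℝ) (J : Fin n → Fin n → ℝ) (x : Fin n → ℝ) : ℝ :=
  (∑ i, c i * x i) - ∑ p ∈ edgePairs G, J p.1 p.2 * x p.1 * x p.2

/-- `S` is an independent set of `G`. -/
def IsIndep {n : ℕ} (G : SimpleGraph (Fin n)) (S : Finset (Fin n)) : Prop :=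
  ∀ i ∈ S, ∀ j ∈ S, ¬ G.Adj i j

/-!
On a 0/1 vector `x` with support `T`, `Y` is the weight of `T` minus the penalties `J_ij` of the
edges inside `T`. If such an edge `ij` remains, deleting its lighter endpoint, say `i`, loses
`c_i = min (c_i, c_j) ≤ J_ij` and saves at least `J_ij`, since every penalty is nonnegative.
Repeating this until `T` is independent never decreases `Y`, so every value of `Y` is dominated by
the weight of an independent set; conversely, the weight of an independent set is the value of `Y`
at its indicator vector.
-/

section

variable {n : ℕ} (G : SimpleGraph (Fin n)) [DecidableRel G.Adj]

def innerEdges (T : Finset (Fin n)) : Finset (Fin n × Fin n) :=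
  (edgePairs G).filter (fun p => p.1 ∈ T ∧ p.2 ∈ T)

def penalizedWeight (c : Fin n → ℝ) (J : Fin n → Fin n → ℝ) (T : Finset (Fin n)) : ℝ :=
  (∑ i ∈ T, c i) - ∑ p ∈ innerEdges G T, J p.1 p.2

variable {G}

lemma innerEdges_eq_empty_iff {T : Finset (Fin n)} : innerEdges G T = ∅ ↔ IsIndep G T := by
  simp only [eq_empty_iff_forall_notMem, innerEdges, edgePairs, mem_filter, mem_univ, true_and,
    not_and, Prod.forall, IsIndep]
  constructor
  · intro h i hi j hj hij
    rcases lt_or_gt_of_ne hij.ne with hlt | hlt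
    · exact h i j ⟨hlt, hij⟩ hi hj
    · exact h j i ⟨hlt, hij.symm⟩ hj hi
  · exact fun h i j hij hi hj => h i hi j hj hij.2

lemma mem_of_mem_innerEdges {T : Finset (Fin n)} {p : Fin n × Fin n} (hp : p ∈ innerEdges G T)
    {v : Fin n} (hv : v = p.1 ∨ v = p.2) : v ∈ T := by
  simp only [innerEdges, mem_filter] at hp
  rcases hv with rfl | rfl
  exacts [hp.2.1, hp.2.2]

lemma penalizedWeight_of_isIndep (c : Fin n → ℝ) (J : Fin n → Fin n → ℝ) {T : Finset (Fin n)}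
    (hT : IsIndep G T) : penalizedWeight G c J T = ∑ i ∈ T, c i := by
  simp [penalizedWeight, innerEdges_eq_empty_iff.mpr hT]

lemma penalizedWeight_le_erase (c : Fin n → ℝ) (J : Fin n → Fin n → ℝ)
    (hJ : ∀ p ∈ edgePairs G, 0 ≤ J p.1 p.2) {T : Finset (Fin n)} {p : Fin n × Fin n}
    (hp : p ∈ innerEdges G T) {v : Fin n} (hv : v = p.1 ∨ v = p.2) (hcv : c v ≤ J p.1 p.2) :
    penalizedWeight G c J T ≤ penalizedWeight G c J (T.erase v) := by
  have hvT := mem_of_mem_innerEdges hp hv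
  have hpErase : p ∉ innerEdges G (T.erase v) := by
    simp only [innerEdges, mem_filter, mem_erase, not_and]
    rcases hv with rfl | rfl <;> simp
  have hsub : insert p (innerEdges G (T.erase v)) ⊆ innerEdges G T := by
    refine insert_subset hp fun q hq => ?_
    simp only [innerEdges, mem_filter, mem_erase] at hq ⊢
    exact ⟨hq.1, hq.2.1.2, hq.2.2.2⟩
  have hpenalty : J p.1 p.2 + ∑ q ∈ innerEdges G (T.erase v), J q.1 q.2 ≤
      ∑ q ∈ innerEdges G T, J q.1 q.2 := by
    rw [← sum_insert (f := fun q : Fin n × Fin n => J q.1 q.2) hpErase]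
    exact sum_le_sum_of_subset_of_nonneg hsub fun q hq _ => hJ q (mem_filter.mp hq).1
  have hweight := sum_erase_eq_sub (f := c) hvT
  unfold penalizedWeight
  linarith

lemma exists_isIndep_penalizedWeight_le (c : Fin n → ℝ) (J : Fin n → Fin n → ℝ)
    (hc : ∀ i, 0 < c i) (hJ : ∀ i j, G.Adj i j → min (c i) (c j) ≤ J i j)
    (T : Finset (Fin n)) : ∃ S, IsIndep G S ∧ penalizedWeight G c J T ≤ ∑ i ∈ S, c i := by
  have hJnonneg : ∀ p ∈ edgePairs G, 0 ≤ J p.1 p.2 := fun p hp =>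
    (le_min (hc p.1).le (hc p.2).le).trans (hJ _ _ (mem_filter.mp hp).2.2)
  induction T using Finset.strongInduction with
  | _ T ih =>
    by_cases hT : IsIndep G T
    · exact ⟨T, hT, (penalizedWeight_of_isIndep c J hT).le⟩
    obtain ⟨p, hp⟩ := nonempty_iff_ne_empty.mpr (mt innerEdges_eq_empty_iff.mp hT)
    have hJp := hJ _ _ (mem_filter.mp (mem_filter.mp hp).1).2.2
    obtain ⟨v, hv, hcv⟩ : ∃ v, (v = p.1 ∨ v = p.2) ∧ c v ≤ J p.1 p.2 := by
      rcases le_total (c p.1) (c p.2) with h | h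
      · exact ⟨p.1, .inl rfl, by rwa [min_eq_left h] at hJp⟩
      · exact ⟨p.2, .inr rfl, by rwa [min_eq_right h] at hJp⟩
    obtain ⟨S, hS, hle⟩ := ih (T.erase v) (erase_ssubset (mem_of_mem_innerEdges hp hv))
    exact ⟨S, hS, (penalizedWeight_le_erase c J hJnonneg hp hv hcv).trans hle⟩

lemma Y_indicator (c : Fin n → ℝ) (J : Fin n → Fin n → ℝ) (T : Finset (Fin n)) :
    Y G c J (fun i => if i ∈ T then 1 else 0) = penalizedWeight G c J T := by
  simp only [Y, penalizedWeight, innerEdges, sum_filter, mul_ite, mul_one, mul_zero, ite_and]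
  congr 1
  · rw [sum_ite_mem, univ_inter]
  · refine sum_congr rfl fun p _ => ?_
    split_ifs <;> simp_all

end

lemma eq_indicator_of_forall_eq_zero_or_eq_one {n : ℕ} {x : Fin n → ℝ}
    (hx : ∀ i, x i = 0 ∨ x i = 1) : x = fun i => if i ∈ univ.filter (x · = 1) then 1 else 0 := by
  funext i
  rcases hx i with h | h <;> simp [h]

theorem stmt0_general {n : ℕ} (G : SimpleGraph (Fin n)) [DecidableRel G.Adj]
    (c : Fin n → ℝ) (J : Fin n → Fin n → ℝ)
    (hc : ∀ i, 0 < c i)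
    (hJ : ∀ i j, G.Adj i j → min (c i) (c j) ≤ J i j) :
    sSup {y : ℝ | ∃ x : Fin n → ℝ, (∀ i, x i = 0 ∨ x i = 1) ∧ y = Y G c J x} =
      sSup {w : ℝ | ∃ S : Finset (Fin n), IsIndep G S ∧ w = ∑ i ∈ S, c i} := by
  apply csSup_eq_csSup_of_forall_exists_le
  · rintro _ ⟨x, hx, rfl⟩
    obtain ⟨S, hS, hle⟩ := exists_isIndep_penalizedWeight_le c J hc hJ (univ.filter (x · = 1))
    refine ⟨_, ⟨S, hS, rfl⟩, ?_⟩
    rwa [eq_indicator_of_forall_eq_zero_or_eq_one hx, Y_indicator]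
  · rintro _ ⟨S, hS, rfl⟩
    refine ⟨_, ⟨fun i => if i ∈ S then 1 else 0, fun i => ?_, rfl⟩, ?_⟩
    · by_cases h : i ∈ S <;> simp [h]
    · rw [Y_indicator, penalizedWeight_of_isIndep c J hS]

theorem stmt0 {n : ℕ} (G : SimpleGraph (Fin n)) [DecidableRel G.Adj]
    (c : Fin n → ℝ) (J : Fin n → Fin n → ℝ)
    (hc : ∀ i, 0 < c i)
    (hJsymm : ∀ i j, J i j = J j i)
    (hJ : ∀ i j, G.Adj i j → min (c i) (c j) ≤ J i j) :
    sSup {y : ℝ | ∃ x : Fin n → ℝ, (∀ i, x i = 0 ∨ x i = 1) ∧ y = Y G c J x} =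
      sSup {w : ℝ | ∃ S : Finset (Fin n), IsIndep G S ∧ w = ∑ i ∈ S, c i} :=
  stmt0_general G c J hc hJ
end

section
/- In the CK graph CK(r, g) with g ≥ 2: for every function f : {1,…,g} → {1,…,r}, the set S_f consisting of the f(k)-th vertex of clique k of V_B for each k = 1,…,g is a maximal independent set of total weight g·w_B; moreover distinct functions f give distinct sets, so CK(r,g) has exactly r^g maximal independent sets of this form. -/
open Finset

/-- Vertex type of the CK graph `CK(r,g)`: `V_A` = `g` groups of 2 vertices (left),
`V_B` = `g` cliques of `r` vertices (right). -/
abbrev CKV (r g : ℕ) := (Fin g × Fin 2) ⊕ (Fin g × Fin r)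

/-- The CK graph `CK(r,g)`: no edges inside `V_A`; each `r`-clique of `V_B` is complete;
a vertex of group `k` of `V_A` is adjacent to every vertex of every clique of `V_B`
except clique `k`; no edges between distinct cliques of `V_B`. -/
def CKGraph (r g : ℕ) : SimpleGraph (CKV r g) where
  Adj u v :=
    match u, v with
    | Sum.inl _, Sum.inl _ => False
    | Sum.inl a, Sum.inr b => a.1 ≠ b.1
    | Sum.inr a, Sum.inl b => b.1 ≠ a.1
    | Sum.inr a, Sum.inr b => a.1 = b.1 ∧ a.2 ≠ b.2
  symm := by
    constructor
    rintro (⟨k, a⟩ | ⟨k, a⟩) (⟨l, b⟩ | ⟨l, b⟩) h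
    · exact h
    · exact h
    · exact h
    · exact ⟨h.1.symm, h.2.symm⟩
  loopless := by
    constructor
    rintro (⟨k, a⟩ | ⟨k, a⟩) h
    · exact h
    · exact h.2 rfl

/-- `S` is an independent set of `CK(r,g)`. -/
def CKIndep {r g : ℕ} (S : Finset (CKV r g)) : Prop :=
  ∀ u ∈ S, ∀ v ∈ S, ¬ (CKGraph r g).Adj u v

/-- `S` is a maximal independent set of `CK(r,g)`. -/
def CKMaxIndep {r g : ℕ} (S : Finset (CKV r g)) : Prop :=
  CKIndep S ∧ ∀ v : CKV r g, CKIndep (insert v S) → v ∈ S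

/-- The total weight of `S`, where `V_A`-vertices weigh `wA` and `V_B`-vertices weigh `wB`. -/
def CKwt {r g : ℕ} (wA wB : ℝ) (S : Finset (CKV r g)) : ℝ :=
  ∑ v ∈ S, Sum.elim (fun _ => wA) (fun _ => wB) v

/-- The set `V_A` of the CK graph, as a `Finset`. -/
def VA (r g : ℕ) : Finset (CKV r g) :=
  (Finset.univ : Finset (Fin g × Fin 2)).image Sum.inl

/-- For `f : Fin g → Fin r`, the selection `S_f` consisting of the `f k`-th vertex of
clique `k` of `V_B`, for each `k`. -/
def Sf {r g : ℕ} (f : Fin g → Fin r) : Finset (CKV r g) :=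
  (Finset.univ : Finset (Fin g)).image (fun k => Sum.inr (k, f k))

/-! A vertex `(k, b)` of `V_B` is adjacent to every other vertex of clique `k`, and a vertex of
group `k` of `V_A` is adjacent to the chosen vertex of any clique `k' ≠ k`, which exists since
`g ≥ 2`; so no vertex can be added to `S_f`. The selections `S_f` are distinct because `S_f`
meets clique `k` exactly in `(k, f k)`, which gives `r ^ g` of them. -/

section Selection

variable {r g : ℕ}

theorem mem_Sf {f : Fin g → Fin r} {v : CKV r g} : v ∈ Sf f ↔ ∃ k, Sum.inr (k, f k) = v := by
  simp [Sf]

theorem inr_mem_Sf_iff {f : Fin g → Fin r} {k : Fin g} {b : Fin r} :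
    (Sum.inr (k, b) : CKV r g) ∈ Sf f ↔ b = f k := by
  simp [Sf, eq_comm]

theorem Sf_injective : Function.Injective (Sf : (Fin g → Fin r) → Finset (CKV r g)) := by
  intro f f' h
  funext k
  exact (inr_mem_Sf_iff.mp (h ▸ inr_mem_Sf_iff.mpr rfl)).symm

theorem ckIndep_Sf (f : Fin g → Fin r) : CKIndep (Sf f) := by
  simp only [CKIndep, mem_Sf]
  rintro _ ⟨k, rfl⟩ _ ⟨l, rfl⟩ ⟨rfl, hne⟩
  exact hne rfl

theorem ckMaxIndep_Sf (hg : 2 ≤ g) (f : Fin g → Fin r) : CKMaxIndep (Sf f) := by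
  refine ⟨ckIndep_Sf f, ?_⟩
  rintro (⟨k, a⟩ | ⟨k, b⟩) hindep
  · have : Nontrivial (Fin g) := Fin.nontrivial_iff_two_le.mpr hg
    obtain ⟨k', hk'⟩ := exists_ne k
    exact absurd hk'.symm <| hindep _ (mem_insert_self _ _) (Sum.inr (k', f k'))
      (mem_insert_of_mem (inr_mem_Sf_iff.mpr rfl))
  · rw [inr_mem_Sf_iff]
    by_contra hb
    exact hindep _ (mem_insert_self _ _) (Sum.inr (k, f k))
      (mem_insert_of_mem (inr_mem_Sf_iff.mpr rfl)) ⟨rfl, hb⟩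

theorem ckwt_Sf (wA wB : ℝ) (f : Fin g → Fin r) : CKwt wA wB (Sf f) = g * wB := by
  have hinj : Function.Injective (fun k : Fin g => (Sum.inr (k, f k) : CKV r g)) :=
    fun k l h => congrArg Prod.fst (Sum.inr_injective h)
  rw [CKwt, Sf, sum_image fun k _ l _ h => hinj h]
  simp

theorem card_image_Sf :
    ((univ : Finset (Fin g → Fin r)).image (fun f => (Sf f : Finset (CKV r g)))).card = r ^ g := by
  rw [card_image_of_injective _ Sf_injective, card_univ, Fintype.card_fun, Fintype.card_fin,
    Fintype.card_fin]

end Selection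

theorem stmt8_general (r g : ℕ) (hg : 2 ≤ g)
    (wA wB : ℝ) :
    (∀ f : Fin g → Fin r, CKMaxIndep (Sf f) ∧ CKwt wA wB (Sf f) = g * wB) ∧
    (∀ f f' : Fin g → Fin r, Sf f = Sf f' → f = f') ∧
    ((Finset.univ : Finset (Fin g → Fin r)).image (fun f => (Sf f : Finset (CKV r g)))).card
      = r ^ g :=
  ⟨fun f => ⟨ckMaxIndep_Sf hg f, ckwt_Sf wA wB f⟩, fun _ _ h => Sf_injective h, card_image_Sf⟩

theorem stmt8 (r g : ℕ) (hr : 1 ≤ r) (hg : 2 ≤ g)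
    (wA wB : ℝ) (hwA : 0 < wA) (hwB : 0 < wB) :
    (∀ f : Fin g → Fin r, CKMaxIndep (Sf f) ∧ CKwt wA wB (Sf f) = g * wB) ∧
    (∀ f f' : Fin g → Fin r, Sf f = Sf f' → f = f') ∧
    ((Finset.univ : Finset (Fin g → Fin r)).image (fun f => (Sf f : Finset (CKV r g)))).card
      = r ^ g :=
  stmt8_general r g hg wA wB
end
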